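/- Consider a weakly reversible generalized chemical reaction network, let C be a cycle of the network, and let x* ∈ ℝ^n_+. Then there exists a family of edge labels k^ε ∈ ℝ^E_+ indexed by ε > 0 such that x* ∈ Z_{k^ε} for every ε > 0 and A_{k^ε} diag((x*)^Ỹ) → A^C_{k=1} as ε → 0⁺; consequently, the Jacobian matrices J^ε = Y A_{k^ε} diag((x*)^Ỹ) Ỹᵀ diag((x*)^{−1}) converge to Y A^C_{k=1} Ỹᵀ diag((x*)^{−1}) as ε → 0⁺. -/

import Mathlib

open Matrix Polynomial Filter Topology

noncomputable section

/-- `D ∈ 𝒟₊`: a diagonal matrix with positive diagonal entries. -/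
def IsPosDiag {n : ℕ} (D : Matrix (Fin n) (Fin n) ℝ) : Prop :=
  ∃ d : Fin n → ℝ, (∀ i, 0 < d i) ∧ D = Matrix.diagonal d

/-- A real square matrix is stable if every root in `ℂ` of its characteristic
polynomial has negative real part. -/
def IsStableMat {n : ℕ} (A : Matrix (Fin n) (Fin n) ℝ) : Prop :=
  ∀ z : ℂ, (A.charpoly.map (algebraMap ℝ ℂ)).IsRoot z → z.re < 0

/-- A real square matrix is semistable if every root in `ℂ` of its characteristic
polynomial has non-positive real part. -/
def IsSemistableMat {n : ℕ} (A : Matrix (Fin n) (Fin n) ℝ) : Prop :=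
  ∀ z : ℂ, (A.charpoly.map (algebraMap ℝ ℂ)).IsRoot z → z.re ≤ 0

/-- The restriction `A|_S : S → S` of a matrix whose range is contained in `S`. -/
def restrictedMap {n : ℕ} (A : Matrix (Fin n) (Fin n) ℝ) (S : Submodule ℝ (Fin n → ℝ))
    (h : ∀ v, A.mulVec v ∈ S) : S →ₗ[ℝ] S :=
  A.mulVecLin.restrict (p := S) (q := S) (fun x _ => by simpa using h x)

/-- `A` is stable on `S`: `range A ⊆ S` and every eigenvalue over `ℂ` (root of the
characteristic polynomial) of `A|_S : S → S` has negative real part. -/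
def IsStableOn {n : ℕ} (A : Matrix (Fin n) (Fin n) ℝ) (S : Submodule ℝ (Fin n → ℝ)) : Prop :=
  ∃ h : ∀ v, A.mulVec v ∈ S,
    ∀ z : ℂ, (((restrictedMap A S h).charpoly).map (algebraMap ℝ ℂ)).IsRoot z → z.re < 0

/-- `A` is semistable on `S`: `range A ⊆ S` and every eigenvalue over `ℂ` of
`A|_S : S → S` has non-positive real part. -/
def IsSemistableOn {n : ℕ} (A : Matrix (Fin n) (Fin n) ℝ) (S : Submodule ℝ (Fin n → ℝ)) : Prop :=
  ∃ h : ∀ v, A.mulVec v ∈ S,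
    ∀ z : ℂ, (((restrictedMap A S h).charpoly).map (algebraMap ℝ ℂ)).IsRoot z → z.re ≤ 0

/-- `M < 0` on `S`. -/
def NegDefOn {n : ℕ} (M : Matrix (Fin n) (Fin n) ℝ) (S : Submodule ℝ (Fin n → ℝ)) : Prop :=
  ∀ x ∈ S, x ≠ 0 → x ⬝ᵥ M.mulVec x < 0

/-- `M ≤ 0` on `S`. -/
def NegSemidefOn {n : ℕ} (M : Matrix (Fin n) (Fin n) ℝ) (S : Submodule ℝ (Fin n → ℝ)) : Prop :=
  ∀ x ∈ S, x ⬝ᵥ M.mulVec x ≤ 0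

/-- `M > 0` on `S`. -/
def PosDefOn {n : ℕ} (M : Matrix (Fin n) (Fin n) ℝ) (S : Submodule ℝ (Fin n → ℝ)) : Prop :=
  ∀ x ∈ S, x ≠ 0 → 0 < x ⬝ᵥ M.mulVec x

/-- The Laplacian matrix `A_k` of the labeled digraph `(V,E)` with edge labels `k`:
`(A_k)_{i',i} = k_{i→i'}` if `(i→i') ∈ E`, `(A_k)_{i,i} = -∑_{(i→i')∈E} k_{i→i'}`,
and `0` otherwise (the graph has no self-loops). -/
def laplacian {m : ℕ} (E : Finset (Fin m × Fin m)) (k : Fin m × Fin m → ℝ) :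
    Matrix (Fin m) (Fin m) ℝ :=
  fun i' i => (if (i, i') ∈ E then k (i, i') else 0)
    - (if i' = i then ∑ e ∈ E.filter (fun e => e.1 = i), k e else 0)

/-- The incidence matrix `I_E ∈ ℝ^{V×E}`, with column `e_{i'} - e_i` for each edge `(i→i')`. -/
def incidence {m : ℕ} (E : Finset (Fin m × Fin m)) :
    Matrix (Fin m) {e : Fin m × Fin m // e ∈ E} ℝ :=
  fun i e => (if (e : Fin m × Fin m).2 = i then (1 : ℝ) else 0)
    - (if (e : Fin m × Fin m).1 = i then 1 else 0)

/-- `x^Ỹ ∈ ℝ^V`, defined by `(x^Ỹ)_j = ∏_i x_i ^ (Ỹ)_{ij}` (real exponents). -/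
def powVec {n m : ℕ} (x : Fin n → ℝ) (Yt : Matrix (Fin n) (Fin m) ℝ) : Fin m → ℝ :=
  fun j => ∏ i, (x i) ^ (Yt i j)

/-- The digraph `(V,E)` is weakly reversible: every connected component is strongly
connected, i.e. whenever `a` and `b` are connected by an undirected path, there is a
directed path from `a` to `b`. -/
def WeaklyReversible {m : ℕ} (E : Finset (Fin m × Fin m)) : Prop :=
  ∀ a b : Fin m,
    Relation.ReflTransGen (fun u v => (u, v) ∈ E ∨ (v, u) ∈ E) a b →
    Relation.ReflTransGen (fun u v => (u, v) ∈ E) a b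

/-- The stoichiometric subspace `S = range (Y I_E)`. -/
def stoichSubspace {n m : ℕ} (Y : Matrix (Fin n) (Fin m) ℝ) (E : Finset (Fin m × Fin m)) :
    Submodule ℝ (Fin n → ℝ) :=
  LinearMap.range (Y * incidence E).mulVecLin

/-- The Jacobian matrix `J(x) = Y A_k diag(x^Ỹ) Ỹᵀ diag(x⁻¹)` of `x ↦ Y A_k x^Ỹ`. -/
def jacobianMat {n m : ℕ} (E : Finset (Fin m × Fin m)) (k : Fin m × Fin m → ℝ)
    (Y Yt : Matrix (Fin n) (Fin m) ℝ) (x : Fin n → ℝ) : Matrix (Fin n) (Fin n) ℝ :=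
  Y * laplacian E k * Matrix.diagonal (powVec x Yt) * Ytᵀ * Matrix.diagonal (fun i => (x i)⁻¹)

/-- `C` is (the edge set of) a cycle: `{i_1→i_2, …, i_{r-1}→i_r, i_r→i_1}` with
pairwise distinct vertices `i_1, …, i_r` (and `r ≥ 2`). -/
def IsCycleEdges {m : ℕ} (C : Finset (Fin m × Fin m)) : Prop :=
  ∃ (r : ℕ) (f : Fin (r + 2) → Fin m), Function.Injective f ∧
    C = Finset.image (fun j => (f j, f (j + 1))) Finset.univ

/-- The edge set of the directed `m`-cycle `1 → 2 → ⋯ → m → 1`. -/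
def cycleEdges (m : ℕ) [NeZero m] : Finset (Fin m × Fin m) :=
  Finset.image (fun i : Fin m => (i, i + 1)) Finset.univ

end

/-! A weakly reversible graph carries a circulation `w` that is positive on every edge: sum, over
the edges `i → i'`, the indicator of that edge plus a directed path back from `i'` to `i`.
With `c = (x*)^Ỹ` take `k^ε_{i→i'} = (𝟙_C(i→i') + ε w_{i→i'}) / c_i`. Dividing each label by the
value of `c` at its source is undone by `diag c`, so `A_{k^ε} diag c = A^C_{k=1} + ε A_w`, which
tends to `A^C_{k=1}`; and `A_{k^ε} c = (A^C_{k=1} + ε A_w) 𝟙` is the net inflow of the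
circulation `𝟙_C + ε w`, hence zero. -/

section Graph

variable {V : Type*} [DecidableEq V]

def netInflow (E : Finset (V × V)) : (V × V → ℝ) →ₗ[ℝ] V → ℝ :=
  ∑ e ∈ E, (LinearMap.proj e).smulRight (Pi.single e.2 1 - Pi.single e.1 1)

lemma netInflow_apply (E : Finset (V × V)) (w : V × V → ℝ) :
    netInflow E w = ∑ e ∈ E, w e • (Pi.single e.2 1 - Pi.single e.1 1 : V → ℝ) := by
  simp [netInflow]

lemma netInflow_single {E : Finset (V × V)} {e : V × V} (he : e ∈ E) :
    netInflow E (Pi.single e 1) = Pi.single e.2 1 - Pi.single e.1 1 := by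
  rw [netInflow_apply, Finset.sum_eq_single_of_mem e he fun f _ hf => by simp [hf]]
  simp

lemma exists_flow_of_reflTransGen {E : Finset (V × V)} {a b : V}
    (h : Relation.ReflTransGen (fun u v => (u, v) ∈ E) a b) :
    ∃ w : V × V → ℝ, 0 ≤ w ∧ netInflow E w = Pi.single b 1 - Pi.single a 1 := by
  induction h with
  | refl => exact ⟨0, le_rfl, by simp⟩
  | @tail b c _ hbc ih =>
    obtain ⟨w, hw, hflow⟩ := ih
    refine ⟨w + Pi.single (b, c) 1, add_nonneg hw (Pi.single_nonneg.2 zero_le_one), ?_⟩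
    rw [map_add, hflow, netInflow_single hbc]
    abel

def edgeLaplacian (e : V × V) : Matrix V V ℝ :=
  Matrix.single e.2 e.1 1 - Matrix.single e.1 e.1 1

variable [Fintype V]

lemma edgeLaplacian_mul_diagonal (e : V × V) (c : V → ℝ) :
    edgeLaplacian e * diagonal c = c e.1 • edgeLaplacian e := by
  ext i j
  simp only [edgeLaplacian, Matrix.mul_diagonal, Matrix.smul_apply, Matrix.sub_apply,
    Matrix.single_apply, smul_eq_mul]
  grind

lemma edgeLaplacian_mulVec_one (e : V × V) :
    edgeLaplacian e *ᵥ 1 = Pi.single e.2 1 - Pi.single e.1 1 := by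
  simp [edgeLaplacian, Matrix.sub_mulVec, Matrix.single_mulVec_eq]

end Graph

section Laplacian

variable {m : ℕ}

lemma laplacian_eq_sum (E : Finset (Fin m × Fin m)) (k : Fin m × Fin m → ℝ) :
    laplacian E k = ∑ e ∈ E, k e • edgeLaplacian e := by
  ext i' i
  simp only [laplacian, edgeLaplacian, Matrix.sum_apply, Matrix.smul_apply, Matrix.sub_apply,
    Matrix.single_apply, smul_eq_mul, mul_sub, Finset.sum_sub_distrib]
  congr 1
  · have hedge (e : Fin m × Fin m) : (e.2 = i' ∧ e.1 = i) ↔ (i, i') = e := by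
      rcases e with ⟨a, b⟩
      simp [and_comm, eq_comm]
    simp only [hedge, mul_ite, mul_one, mul_zero, Finset.sum_ite_eq]
  · split_ifs with h
    · subst h
      simp [Finset.sum_filter]
    · simp only [mul_ite, mul_one, mul_zero]
      exact (Finset.sum_eq_zero fun e _ => if_neg fun he => h (he.1.symm.trans he.2)).symm

lemma laplacian_add_smul (E : Finset (Fin m × Fin m)) (k w : Fin m × Fin m → ℝ) (ε : ℝ) :
    laplacian E (fun e => k e + ε * w e) = laplacian E k + ε • laplacian E w := by
  simp only [laplacian_eq_sum, add_smul, Finset.sum_add_distrib, Finset.smul_sum, smul_smul]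

lemma laplacian_indicator_of_subset {E C : Finset (Fin m × Fin m)} (hCE : C ⊆ E) :
    laplacian E (fun e => if e ∈ C then 1 else 0) = laplacian C fun _ => 1 := by
  simp only [laplacian_eq_sum, ite_smul, one_smul, zero_smul, Finset.sum_ite_mem,
    Finset.inter_eq_right.2 hCE]

lemma laplacian_div_mul_diagonal (E : Finset (Fin m × Fin m)) (k : Fin m × Fin m → ℝ)
    {c : Fin m → ℝ} (hc : ∀ i, c i ≠ 0) :
    laplacian E (fun e => k e / c e.1) * diagonal c = laplacian E k := by
  simp only [laplacian_eq_sum, Finset.sum_mul, Matrix.smul_mul, edgeLaplacian_mul_diagonal,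
    smul_smul, div_mul_cancel₀ _ (hc _)]

lemma laplacian_mulVec_one (E : Finset (Fin m × Fin m)) (k : Fin m × Fin m → ℝ) :
    laplacian E k *ᵥ 1 = netInflow E k := by
  simp only [laplacian_eq_sum, Matrix.sum_mulVec, Matrix.smul_mulVec, edgeLaplacian_mulVec_one,
    netInflow_apply]

lemma exists_circulation_pos_of_weaklyReversible {E : Finset (Fin m × Fin m)}
    (hwr : WeaklyReversible E) :
    ∃ w : Fin m × Fin m → ℝ, (∀ e ∈ E, 0 < w e) ∧ netInflow E w = 0 := by
  have hloop : ∀ e ∈ E, ∃ u : Fin m × Fin m → ℝ, 0 ≤ u ∧ 0 < u e ∧ netInflow E u = 0 := by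
    intro e he
    obtain ⟨w, hw, hflow⟩ := exists_flow_of_reflTransGen (hwr e.2 e.1 (.single (Or.inr he)))
    refine ⟨w + Pi.single e 1, add_nonneg hw (Pi.single_nonneg.2 zero_le_one), ?_, ?_⟩
    · simpa using add_pos_of_nonneg_of_pos (hw e) one_pos
    · rw [map_add, hflow, netInflow_single he]
      abel
  choose! u hu_nonneg hu_pos hu_circ using hloop
  refine ⟨∑ e ∈ E, u e, fun e he => ?_, by simp [map_sum, Finset.sum_eq_zero hu_circ]⟩
  rw [Finset.sum_apply]
  exact (hu_pos e he).trans_le (Finset.single_le_sum (fun f hf => hu_nonneg f hf e) he)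

lemma netInflow_one_of_isCycleEdges {C : Finset (Fin m × Fin m)} (hC : IsCycleEdges C) :
    netInflow C (fun _ => 1) = 0 := by
  obtain ⟨r, f, hf, rfl⟩ := hC
  rw [netInflow_apply, Finset.sum_image fun i _ j _ hij => hf (congrArg Prod.fst hij)]
  simp only [one_smul, Finset.sum_sub_distrib]
  rw [sub_eq_zero]
  exact Fintype.sum_equiv (Equiv.addRight 1) _ _ fun _ => rfl

end Laplacian

lemma powVec_pos {n m : ℕ} {x : Fin n → ℝ} (hx : ∀ i, 0 < x i) (Yt : Matrix (Fin n) (Fin m) ℝ)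
    (j : Fin m) : 0 < powVec x Yt j :=
  Finset.prod_pos fun i _ => Real.rpow_pos_of_pos (hx i) _

lemma tendsto_add_smul_nhdsWithin_zero {M : Type*} [AddCommGroup M] [Module ℝ M]
    [TopologicalSpace M] [ContinuousAdd M] [ContinuousSMul ℝ M] (a b : M) (s : Set ℝ) :
    Tendsto (fun ε : ℝ => a + ε • b) (𝓝[s] 0) (𝓝 a) := by
  have hcont : Continuous fun ε : ℝ => a + ε • b := by fun_prop
  simpa using (hcont.tendsto 0).mono_left nhdsWithin_le_nhds

theorem stmt14_general {n m : ℕ} (E : Finset (Fin m × Fin m))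
    (hwr : WeaklyReversible E) (Y Yt : Matrix (Fin n) (Fin m) ℝ)
    (C : Finset (Fin m × Fin m)) (hC : IsCycleEdges C) (hCE : C ⊆ E)
    (x : Fin n → ℝ) (hx : ∀ i, 0 < x i) :
    ∃ K : ℝ → (Fin m × Fin m → ℝ),
      (∀ ε > (0 : ℝ), ∀ e ∈ E, 0 < K ε e) ∧
      (∀ ε > (0 : ℝ), (laplacian E (K ε)).mulVec (powVec x Yt) = 0) ∧
      Filter.Tendsto (fun ε => laplacian E (K ε) * Matrix.diagonal (powVec x Yt))
        (nhdsWithin 0 (Set.Ioi 0)) (nhds (laplacian C (fun _ => 1))) ∧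
      Filter.Tendsto (fun ε => jacobianMat E (K ε) Y Yt x)
        (nhdsWithin 0 (Set.Ioi 0))
        (nhds (Y * laplacian C (fun _ => 1) * Ytᵀ *
          Matrix.diagonal (fun i => (x i)⁻¹))) := by
  obtain ⟨w, hw_pos, hw_circ⟩ := exists_circulation_pos_of_weaklyReversible hwr
  set c := powVec x Yt
  have hc : ∀ j, 0 < c j := powVec_pos hx Yt
  set K : ℝ → Fin m × Fin m → ℝ := fun ε e => ((if e ∈ C then 1 else 0) + ε * w e) / c e.1
  have hKc (ε : ℝ) : laplacian E (K ε) * diagonal c =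
      laplacian C (fun _ => 1) + ε • laplacian E w := by
    rw [laplacian_div_mul_diagonal _ _ fun j => (hc j).ne', laplacian_add_smul,
      laplacian_indicator_of_subset hCE]
  have hlim : Tendsto (fun ε => laplacian E (K ε) * diagonal c) (𝓝[>] 0)
      (𝓝 (laplacian C fun _ => 1)) := by
    simpa only [hKc] using tendsto_add_smul_nhdsWithin_zero _ _ _
  refine ⟨K, fun ε hε e he => ?_, fun ε _ => ?_, hlim, ?_⟩
  · exact div_pos (add_pos_of_nonneg_of_pos (by positivity) (mul_pos hε (hw_pos e he))) (hc _)
  · calc laplacian E (K ε) *ᵥ c = (laplacian E (K ε) * diagonal c) *ᵥ 1 := by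
          rw [← mulVec_mulVec, show diagonal c *ᵥ 1 = c by ext; simp [mulVec_diagonal]]
      _ = netInflow C (fun _ => 1) + ε • netInflow E w := by
          rw [hKc, add_mulVec, smul_mulVec, laplacian_mulVec_one, laplacian_mulVec_one]
      _ = 0 := by rw [netInflow_one_of_isCycleEdges hC, hw_circ, smul_zero, add_zero]
  · have hcont : Continuous fun M : Matrix (Fin m) (Fin m) ℝ =>
        Y * M * Ytᵀ * diagonal fun i => (x i)⁻¹ := by fun_prop
    simpa only [jacobianMat, Matrix.mul_assoc, Function.comp_def] using
      (hcont.tendsto _).comp hlim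

/-- approximating a cycle: there is a family `k^ε` of rate constants with
`x* ∈ Z_{k^ε}` for all `ε > 0`, `A_{k^ε} diag((x*)^Ỹ) → A^C_{k=1}`, and
`J^ε → Y A^C_{k=1} Ỹᵀ diag((x*)⁻¹)` as `ε → 0⁺`. -/
theorem stmt14 {n m : ℕ} (E : Finset (Fin m × Fin m)) (hE : ∀ e ∈ E, e.1 ≠ e.2)
    (hwr : WeaklyReversible E) (Y Yt : Matrix (Fin n) (Fin m) ℝ)
    (C : Finset (Fin m × Fin m)) (hC : IsCycleEdges C) (hCE : C ⊆ E)
    (x : Fin n → ℝ) (hx : ∀ i, 0 < x i) :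
    ∃ K : ℝ → (Fin m × Fin m → ℝ),
      (∀ ε > (0 : ℝ), ∀ e ∈ E, 0 < K ε e) ∧
      (∀ ε > (0 : ℝ), (laplacian E (K ε)).mulVec (powVec x Yt) = 0) ∧
      Filter.Tendsto (fun ε => laplacian E (K ε) * Matrix.diagonal (powVec x Yt))
        (nhdsWithin 0 (Set.Ioi 0)) (nhds (laplacian C (fun _ => 1))) ∧
      Filter.Tendsto (fun ε => jacobianMat E (K ε) Y Yt x)
        (nhdsWithin 0 (Set.Ioi 0))
        (nhds (Y * laplacian C (fun _ => 1) * Ytᵀ *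
          Matrix.diagonal (fun i => (x i)⁻¹))) :=
  stmt14_general E hwr Y Yt C hC hCE x hx
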